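/- Let M be a D×D positive semidefinite complex matrix with M ≤ 1 in the Loewner order (i.e., 1 − M is positive semidefinite), and let U be a D×D unitary matrix. If √M·U†·M·U·√M = M, then M is an orthogonal projection, i.e., M² = M. -/

import Mathlib

open Matrix Finset
open scoped ComplexOrder

noncomputable section

/-- The positive semidefinite square root of a positive semidefinite matrix
(removed from Mathlib; restored here with its old definition). -/
def Matrix.PosSemidef.sqrt {n 𝕜 : Type*} [Fintype n] [DecidableEq n] [RCLike 𝕜]
    {A : Matrix n n 𝕜} (hA : A.PosSemidef) : Matrix n n 𝕜 :=
  hA.1.eigenvectorUnitary.1 * diagonal ((↑) ∘ Real.sqrt ∘ hA.1.eigenvalues) *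
  (star hA.1.eigenvectorUnitary : Matrix n n 𝕜)

theorem Matrix.PosSemidef.posSemidef_sqrt {n 𝕜 : Type*} [Fintype n] [DecidableEq n] [RCLike 𝕜]
    {A : Matrix n n 𝕜} (hA : A.PosSemidef) : hA.sqrt.PosSemidef := by
  unfold Matrix.PosSemidef.sqrt
  apply PosSemidef.mul_mul_conjTranspose_same
  refine posSemidef_diagonal_iff.mpr fun i ↦ ?_
  rw [Function.comp_apply, RCLike.nonneg_iff]
  constructor
  · simp only [RCLike.ofReal_re]
    exact Real.sqrt_nonneg _
  · simp only [RCLike.ofReal_im]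

theorem Matrix.PosSemidef.sqrt_mul_self {n 𝕜 : Type*} [Fintype n] [DecidableEq n] [RCLike 𝕜]
    {A : Matrix n n 𝕜} (hA : A.PosSemidef) : hA.sqrt * hA.sqrt = A := by
  let C : Matrix n n 𝕜 := hA.1.eigenvectorUnitary
  let E := diagonal ((↑) ∘ Real.sqrt ∘ hA.1.eigenvalues : n → 𝕜)
  suffices C * (E * (star C * C) * E) * star C = A by
    change (C * E * star C) * (C * E * star C) = A
    simpa only [← mul_assoc] using this
  have : star C * C = 1 := by simp [C]
  rw [this, mul_one]
  change C * (E * E) * star C = A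
  rw [diagonal_mul_diagonal]
  conv_rhs => rw [hA.1.spectral_theorem]
  congr 2
  ext i j
  simp only [diagonal_apply, Function.comp_apply]
  split_ifs with h
  · rw [← RCLike.ofReal_mul, Real.mul_self_sqrt (hA.eigenvalues_nonneg i)]
  · rfl

/-- If a POVM element `M ≤ 1` satisfies `√M·U†·M·U·√M = M` for some unitary `U`,
then `M` is an orthogonal projection. -/
theorem repeated_outcome_equality_implies_projection
    (D : ℕ) (hD : 1 ≤ D)
    (M : Matrix (Fin D) (Fin D) ℂ) (hM : M.PosSemidef)
    (hM1 : (1 - M).PosSemidef)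
    (U : Matrix (Fin D) (Fin D) ℂ) (hU : U ∈ Matrix.unitaryGroup (Fin D) ℂ)
    (heq : hM.sqrt * Uᴴ * M * U * hM.sqrt = M) :
    M * M = M := by
  set Q := hM.sqrt with hQdef
  have hQ : Q.PosSemidef := hM.posSemidef_sqrt
  have hQH : Qᴴ = Q := hQ.isHermitian
  have hQQ : Q * Q = M := hM.sqrt_mul_self
  have hUU' : Uᴴ * U = 1 := by
    have := (Matrix.mem_unitaryGroup_iff').mp hU
    simpa [Matrix.star_eq_conjTranspose] using this
  have hUU : U * Uᴴ = 1 := by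
    have := (Matrix.mem_unitaryGroup_iff).mp hU
    simpa [Matrix.star_eq_conjTranspose] using this
  -- N := Uᴴ * M * U
  have hN : (1 - Uᴴ * M * U).PosSemidef := by
    have h := hM1.conjTranspose_mul_mul_same U
    have : Uᴴ * (1 - M) * U = 1 - Uᴴ * M * U := by
      rw [Matrix.mul_sub, Matrix.sub_mul, Matrix.mul_one, hUU']
    rwa [this] at h
  have hzero : Q * (1 - Uᴴ * M * U) * Q = 0 := by
    have : Q * (1 - Uᴴ * M * U) * Q
        = Q * Q - Q * Uᴴ * M * U * Q := by
      rw [Matrix.mul_sub, Matrix.sub_mul, Matrix.mul_one]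
      rw [Matrix.mul_assoc, Matrix.mul_assoc, Matrix.mul_assoc, Matrix.mul_assoc,
        Matrix.mul_assoc, Matrix.mul_assoc]
    rw [this, hQQ, heq, sub_self]
  set T := hN.sqrt with hTdef
  have hTH : Tᴴ = T := hN.posSemidef_sqrt.isHermitian
  have hTT : T * T = 1 - Uᴴ * M * U := hN.sqrt_mul_self
  have hTQ : T * Q = 0 := by
    rw [← Matrix.conjTranspose_mul_self_eq_zero (A := T * Q)]
    calc (T * Q)ᴴ * (T * Q) = Q * (T * T) * Q := by
          rw [Matrix.conjTranspose_mul, hTH, hQH]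
          rw [Matrix.mul_assoc, Matrix.mul_assoc, Matrix.mul_assoc]
      _ = 0 := by rw [hTT, hzero]
  have h1 : (1 - Uᴴ * M * U) * Q = 0 := by
    rw [← hTT, Matrix.mul_assoc, hTQ, Matrix.mul_zero]
  have h2 : M * (U * Q) = U * Q := by
    have h3 : Uᴴ * M * U * Q = Q := by
      have := sub_eq_zero.mp (by simpa [Matrix.sub_mul] using h1)
      simpa [Matrix.mul_assoc] using this.symm
    have h4 : U * (Uᴴ * M * U * Q) = U * Q := by rw [h3]
    conv_rhs => rw [← h4]
    simp only [← Matrix.mul_assoc]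
    rw [hUU, Matrix.one_mul]
  -- ranks
  have hUunit : IsUnit U.det := by
    exact (Matrix.isUnit_iff_isUnit_det U).mp ⟨⟨U, Uᴴ, hUU, hUU'⟩, rfl⟩
  have hrankQ : Q.rank = M.rank := by
    have := Matrix.rank_conjTranspose_mul_self Q
    rw [hQH, hQQ] at this
    exact this.symm
  have hrankUQ : (U * Q).rank = M.rank := by
    rw [Matrix.rank_mul_eq_right_of_isUnit_det U Q hUunit, hrankQ]
  -- subspace argument
  set S := LinearMap.ker (1 - M).mulVecLin with hSdef
  have hS_le : S ≤ LinearMap.range M.mulVecLin := by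
    intro v hv
    have hv' : (1 - M) *ᵥ v = 0 := hv
    have : M *ᵥ v = v := by
      have := hv'
      rw [Matrix.sub_mulVec, Matrix.one_mulVec, sub_eq_zero] at this
      exact this.symm
    exact ⟨v, this⟩
  have hUQ_le : LinearMap.range (U * Q).mulVecLin ≤ S := by
    rintro v ⟨w, rfl⟩
    show (1 - M) *ᵥ ((U * Q) *ᵥ w) = 0
    rw [Matrix.sub_mulVec, Matrix.one_mulVec]
    simp only [Matrix.mulVec_mulVec, ← Matrix.mul_assoc]
    rw [show M * U * Q = U * Q from by rw [Matrix.mul_assoc, h2], sub_self]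
  have hfin : (M.rank : ℕ) ≤ Module.finrank ℂ S := by
    have h4 : Module.finrank ℂ (LinearMap.range (U * Q).mulVecLin) ≤ Module.finrank ℂ S :=
      Submodule.finrank_mono hUQ_le
    rw [← hrankUQ]
    exact h4
  have hSeq : S = LinearMap.range M.mulVecLin := by
    apply Submodule.eq_of_le_of_finrank_le hS_le
    exact hfin
  -- conclude
  have key : ∀ v, M *ᵥ (M *ᵥ v) = M *ᵥ v := by
    intro v
    have hmem : M *ᵥ v ∈ S := by
      rw [hSeq]; exact ⟨v, rfl⟩
    have : (1 - M) *ᵥ (M *ᵥ v) = 0 := hmem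
    rw [Matrix.sub_mulVec, Matrix.one_mulVec, sub_eq_zero] at this
    exact this.symm
  ext i j
  have h5 := congrFun (key (Pi.single j 1)) i
  rw [Matrix.mulVec_mulVec] at h5
  simpa [Matrix.mulVec_single] using h5
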